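/- arXiv:1702.08505 — 3 statements merged into one kernel-verified Lean document; each statement's English description precedes it below -/
import Mathlib

section
/- Fix σ > 0 and α < 1, and set v = α·√(2σ²). Define for t > 0 and τ ∈ (0, t] the function G(t, τ) = e^{-τ} · ∫_{-∞}^{v t - √(2σ²)(t-τ) - 1} (2π σ² τ)^{-1/2} e^{-y²/(2σ²τ)} dy. Then as t → ∞, ln(sup_{τ ∈ (0,t]} G(t, τ)) / t converges to -φ(α), where φ(α) = 2(√2 − 1)(1 − α) if α ≥ 1 − √2, and φ(α) = 1 + α² if α ≤ 1 − √2. -/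
/-!
Put `β = 1 - α` and `τ = x t`. For `x ≤ β` the Gaussian probability in `G(t, x t)` lies between
the density one unit below the endpoint and the Chernoff bound `exp (-t (β - x)² / x)`, so
`log G(t, x t) / t → -tailRate β x = -(x + ((β - x)⁺)² / x)`. The Chernoff bound holds for
every `τ ∈ (0, t]`, hence the supremum decays at the rate `min_{(0, 1]} tailRate β`. By AM-GM,
`2x + β² / x ≥ 2√2 β`, so for `β ≤ √2` the minimum is `2(√2 - 1)β`, attained at `x = β / √2`;
for `β ≥ √2` this point leaves `(0, 1]` and the minimum is `tailRate β 1 = 1 + α²`.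
-/

open Real Filter MeasureTheory ProbabilityTheory Set Topology
open scoped NNReal

section Gaussian

variable {μ : ℝ} {v : ℝ≥0}

lemma gaussianReal_real_apply (hv : v ≠ 0) (s : Set ℝ) :
    (gaussianReal μ v).real s = ∫ x in s, gaussianPDFReal μ v x := by
  rw [measureReal_def, gaussianReal_apply_eq_integral μ hv, ENNReal.toReal_ofReal
    (setIntegral_nonneg_of_ae (ae_of_all _ (gaussianPDFReal_nonneg μ v)))]

/-- Chernoff bound, with the moment generating function evaluated at `(m - μ) / v`. -/
lemma gaussianReal_real_Iic_le_exp (hv : v ≠ 0) {m : ℝ} (hm : m ≤ μ) :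
    (gaussianReal μ v).real (Iic m) ≤ exp (-(m - μ) ^ 2 / (2 * v)) := by
  have hv' : (0 : ℝ) < v := by positivity
  have h := measure_le_le_exp_mul_mgf (μ := gaussianReal μ v) (X := id) m
    (div_nonpos_of_nonpos_of_nonneg (sub_nonpos.2 hm) hv'.le)
    (integrable_exp_mul_gaussianReal _)
  rw [mgf_id_gaussianReal, ← exp_add] at h
  convert h using 2
  · rfl
  · field_simp
    ring

lemma gaussianReal_zero_toNNReal_real {V : ℝ} (hV : 0 < V) (s : Set ℝ) :
    (gaussianReal 0 V.toNNReal).real s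
      = ∫ y in s, (2 * π * V) ^ (-(1 : ℝ) / 2) * exp (-y ^ 2 / (2 * V)) := by
  rw [gaussianReal_real_apply (Real.toNNReal_pos.2 hV).ne']
  congr with y
  rw [gaussianPDFReal, Real.coe_toNNReal _ hV.le, sub_zero, sqrt_eq_rpow,
    ← rpow_neg (by positivity), neg_div, neg_div]

lemma monotoneOn_gaussianPDFReal : MonotoneOn (gaussianPDFReal μ v) (Iic μ) := by
  intro x _ y (hy : y ≤ μ) hxy
  unfold gaussianPDFReal
  gcongr _ * exp (-?_ / _)
  nlinarith

lemma gaussianPDFReal_sub_one_le_gaussianReal_real_Iic (hv : v ≠ 0) {m : ℝ} (hm : m ≤ μ) :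
    gaussianPDFReal μ v (m - 1) ≤ (gaussianReal μ v).real (Iic m) := by
  rw [gaussianReal_real_apply hv]
  calc gaussianPDFReal μ v (m - 1) = gaussianPDFReal μ v (m - 1) * volume.real (Ioc (m - 1) m) := by
        simp
    _ ≤ ∫ x in Ioc (m - 1) m, gaussianPDFReal μ v x :=
        setIntegral_ge_of_const_le_real measurableSet_Ioc measure_Ioc_lt_top.ne
          (fun x hx => monotoneOn_gaussianPDFReal (show m - 1 ≤ μ by linarith)
            (hx.2.trans hm) hx.1.le)
          (integrable_gaussianPDFReal μ v).integrableOn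
    _ ≤ ∫ x in Iic m, gaussianPDFReal μ v x :=
        setIntegral_mono_set (integrable_gaussianPDFReal μ v).integrableOn
          (ae_of_all _ (gaussianPDFReal_nonneg μ v)) Ioc_subset_Iic_self.eventuallyLE

lemma tendsto_log_gaussianPDFReal_div {c : ℝ} (hc : 0 < c) (a b : ℝ) :
    Tendsto (fun t => log (gaussianPDFReal 0 (c * t).toNNReal (a * t + b)) / t) atTop
      (𝓝 (-a ^ 2 / (2 * c))) := by
  have hlog : Tendsto (fun t => log t / t) atTop (𝓝 0) :=
    isLittleO_log_id_atTop.tendsto_div_nhds_zero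
  have hinv : Tendsto (fun t : ℝ => t⁻¹) atTop (𝓝 0) := tendsto_inv_atTop_zero
  have hlim : Tendsto
      (fun t => -(log (2 * π * c) * t⁻¹ + log t / t) / 2 - (a + b * t⁻¹) ^ 2 / (2 * c))
      atTop (𝓝 (-a ^ 2 / (2 * c))) := by
    convert (((hinv.const_mul _).add hlog).neg.div_const _).sub
      ((((hinv.const_mul _).const_add _).pow 2).div_const _) using 2
    ring
  refine hlim.congr' ?_
  filter_upwards [eventually_gt_atTop 0] with t ht
  rw [gaussianPDFReal, Real.coe_toNNReal _ (by positivity), log_mul (by positivity) (exp_pos _).ne',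
    log_inv, log_sqrt (by positivity), log_exp, ← mul_assoc, log_mul (by positivity) ht.ne']
  field_simp
  ring

end Gaussian

noncomputable def tailRate (β x : ℝ) : ℝ := x + max (β - x) 0 ^ 2 / x

lemma mul_tailRate_div {β t τ : ℝ} (ht : 0 < t) :
    t * tailRate β (τ / t) = τ + max (β * t - τ) 0 ^ 2 / τ := by
  have hmax : max (β * t - τ) 0 = t * max (β - τ / t) 0 := by
    rw [mul_max_of_nonneg _ _ ht.le, mul_zero, mul_sub, mul_div_cancel₀ _ ht.ne', mul_comm]
  rw [tailRate, hmax]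
  field_simp

lemma tailRate_of_le {β x : ℝ} (h : x ≤ β) : tailRate β x = x + (β - x) ^ 2 / x := by
  rw [tailRate, max_eq_left (sub_nonneg.2 h)]

lemma two_mul_sqrt_two_sub_one_mul_le_tailRate {β x : ℝ} (hβ : 0 ≤ β) (hx : 0 < x) :
    2 * (√2 - 1) * β ≤ tailRate β x := by
  have h2 : √2 ^ 2 = 2 := sq_sqrt zero_le_two
  rcases le_total x β with hxβ | hβx
  · rw [tailRate_of_le hxβ, ← sub_nonneg]
    have : x + (β - x) ^ 2 / x - 2 * (√2 - 1) * β = (√2 * x - β) ^ 2 / x := by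
      field_simp
      linear_combination (-x ^ 2) * h2
    rw [this]
    positivity
  · have : √2 ≤ 3 / 2 := by nlinarith [sqrt_nonneg 2]
    rw [tailRate, max_eq_right (sub_nonpos.2 hβx), zero_pow two_ne_zero, zero_div, add_zero]
    nlinarith

lemma tailRate_div_sqrt_two {β : ℝ} (hβ : 0 < β) : tailRate β (β / √2) = 2 * (√2 - 1) * β := by
  have h2 : √2 ^ 2 = 2 := sq_sqrt zero_le_two
  have h1 : 1 ≤ √2 := one_le_sqrt.2 one_le_two
  rw [tailRate_of_le (div_le_self hβ.le h1)]
  field_simp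
  linear_combination -h2

lemma isMinOn_tailRate_div_sqrt_two {β : ℝ} (hβ : 0 < β) :
    IsMinOn (tailRate β) (Ioi 0) (β / √2) := isMinOn_iff.2 fun x hx => by
  simpa only [tailRate_div_sqrt_two hβ] using two_mul_sqrt_two_sub_one_mul_le_tailRate hβ.le hx

lemma tailRate_one {β : ℝ} (hβ : 1 ≤ β) : tailRate β 1 = 1 + (1 - β) ^ 2 := by
  rw [tailRate_of_le hβ]
  ring

lemma isMinOn_tailRate_one {β : ℝ} (hβ : √2 ≤ β) : IsMinOn (tailRate β) (Ioc 0 1) 1 := by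
  have h2 : √2 ^ 2 = 2 := sq_sqrt zero_le_two
  have h1 : 1 ≤ β := (one_le_sqrt.2 one_le_two).trans hβ
  refine isMinOn_iff.2 fun x ⟨hx, hx1⟩ => ?_
  rw [tailRate_one h1, tailRate_of_le (hx1.trans h1), ← sub_nonneg]
  have : x + (β - x) ^ 2 / x - (1 + (1 - β) ^ 2) = (1 - x) * (β ^ 2 - 2 * x) / x := by
    field_simp
    ring
  rw [this]
  have : 2 * x ≤ β ^ 2 := by nlinarith [pow_le_pow_left₀ (sqrt_nonneg 2) hβ 2]
  exact div_nonneg (mul_nonneg (by linarith) (by linarith)) hx.le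

lemma tendsto_log_sSup_image_div {F : ℝ → ℝ → ℝ} {A : ℝ → Set ℝ} {ℓ : ℝ → ℝ} {r : ℝ}
    (hℓ : Tendsto (fun t => log (ℓ t) / t) atTop (𝓝 (-r)))
    (hlow : ∀ᶠ t in atTop, 0 < ℓ t ∧ ∃ τ ∈ A t, ℓ t ≤ F t τ)
    (hup : ∀ᶠ t in atTop, ∀ τ ∈ A t, F t τ ≤ exp (-(r * t))) :
    Tendsto (fun t => log (sSup (F t '' A t)) / t) atTop (𝓝 (-r)) := by
  have hbounds : ∀ᶠ t in atTop, log (ℓ t) / t ≤ log (sSup (F t '' A t)) / t ∧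
      log (sSup (F t '' A t)) / t ≤ -r := by
    filter_upwards [hlow, hup, eventually_gt_atTop 0] with t ⟨hℓpos, τ, hτ, hℓF⟩ hFle ht
    have hle : ∀ y ∈ F t '' A t, y ≤ exp (-(r * t)) := forall_mem_image.2 hFle
    have hℓsup : ℓ t ≤ sSup (F t '' A t) := hℓF.trans (le_csSup ⟨_, hle⟩ (mem_image_of_mem _ hτ))
    have hsup : sSup (F t '' A t) ≤ exp (-(r * t)) := csSup_le ⟨_, mem_image_of_mem _ hτ⟩ hle
    refine ⟨div_le_div_of_nonneg_right (log_le_log hℓpos hℓsup) ht.le, ?_⟩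
    rw [div_le_iff₀ ht, neg_mul, ← log_exp (-(r * t))]
    exact log_le_log (hℓpos.trans_le hℓsup) hsup
  exact tendsto_of_tendsto_of_tendsto_of_le_of_le' hℓ tendsto_const_nhds
    (hbounds.mono fun _ h => h.1) (hbounds.mono fun _ h => h.2)

/-- `G(t, τ)` of the statement, with `β = 1 - α`; the integrand there is the density of
`N(0, σ² τ)`. -/
noncomputable def killedGaussianTail (σ β t τ : ℝ) : ℝ :=
  exp (-τ) * (gaussianReal 0 (σ ^ 2 * τ).toNNReal).real (Iic (√(2 * σ ^ 2) * (τ - β * t) - 1))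

section KilledGaussianTail

variable {σ β t : ℝ}

lemma killedGaussianTail_le (hσ : 0 < σ) (ht : 0 < t) {τ : ℝ} (hτ : 0 < τ) :
    killedGaussianTail σ β t τ ≤ exp (-(t * tailRate β (τ / t))) := by
  have hV : (σ ^ 2 * τ).toNNReal ≠ 0 := (Real.toNNReal_pos.2 (by positivity)).ne'
  have hs : √(2 * σ ^ 2) ^ 2 = 2 * σ ^ 2 := sq_sqrt (by positivity)
  set P := gaussianReal 0 (σ ^ 2 * τ).toNNReal
  have hP : P.real (Iic (√(2 * σ ^ 2) * (τ - β * t))) ≤ exp (-(max (β * t - τ) 0 ^ 2 / τ)) := by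
    rcases le_total τ (β * t) with hτβ | hβτ
    · refine (gaussianReal_real_Iic_le_exp hV
        (mul_nonpos_of_nonneg_of_nonpos (sqrt_nonneg _) (sub_nonpos.2 hτβ))).trans_eq ?_
      rw [max_eq_left (sub_nonneg.2 hτβ), Real.coe_toNNReal _ (by positivity), sub_zero, mul_pow,
        hs]
      congr 1
      field_simp
      ring
    · rw [max_eq_right (sub_nonpos.2 hβτ), zero_pow two_ne_zero, zero_div, neg_zero, exp_zero]
      exact measureReal_le_one
  calc killedGaussianTail σ β t τ ≤ exp (-τ) * exp (-(max (β * t - τ) 0 ^ 2 / τ)) := by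
        unfold killedGaussianTail
        gcongr
        exact (measureReal_mono (Iic_subset_Iic.2 (by linarith))).trans hP
    _ = exp (-(t * tailRate β (τ / t))) := by
        rw [← exp_add, mul_tailRate_div ht, neg_add]

lemma exp_mul_gaussianPDFReal_le_killedGaussianTail (hσ : 0 < σ) (ht : 0 < t) {x : ℝ}
    (hx : 0 < x) (hxβ : x ≤ β) :
    exp (-(x * t)) * gaussianPDFReal 0 (σ ^ 2 * x * t).toNNReal (√(2 * σ ^ 2) * (x - β) * t - 2)
      ≤ killedGaussianTail σ β t (x * t) := by
  have hV : (σ ^ 2 * (x * t)).toNNReal ≠ 0 := (Real.toNNReal_pos.2 (by positivity)).ne'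
  have hm : √(2 * σ ^ 2) * (x * t - β * t) - 1 ≤ 0 := by
    nlinarith [mul_nonneg (sqrt_nonneg (2 * σ ^ 2)) (mul_nonneg (sub_nonneg.2 hxβ) ht.le)]
  unfold killedGaussianTail
  gcongr
  rw [show σ ^ 2 * x * t = σ ^ 2 * (x * t) by ring,
    show √(2 * σ ^ 2) * (x - β) * t - 2 = √(2 * σ ^ 2) * (x * t - β * t) - 1 - 1 by ring]
  exact gaussianPDFReal_sub_one_le_gaussianReal_real_Iic hV hm

lemma tendsto_log_exp_mul_gaussianPDFReal_div (hσ : 0 < σ) {x : ℝ} (hx : 0 < x) (hxβ : x ≤ β) :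
    Tendsto (fun t => log (exp (-(x * t)) *
        gaussianPDFReal 0 (σ ^ 2 * x * t).toNNReal (√(2 * σ ^ 2) * (x - β) * t - 2)) / t)
      atTop (𝓝 (-tailRate β x)) := by
  have hs : √(2 * σ ^ 2) ^ 2 = 2 * σ ^ 2 := sq_sqrt (by positivity)
  have h := (tendsto_log_gaussianPDFReal_div (by positivity : 0 < σ ^ 2 * x)
    (√(2 * σ ^ 2) * (x - β)) (-2)).const_add (-x)
  rw [mul_pow, hs, show -x + -(2 * σ ^ 2 * (x - β) ^ 2) / (2 * (σ ^ 2 * x)) = -tailRate β x by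
    rw [tailRate_of_le hxβ]; field_simp; ring] at h
  simp only [← sub_eq_add_neg] at h
  refine h.congr' ?_
  filter_upwards [eventually_gt_atTop 0] with t ht
  rw [log_mul (exp_pos _).ne' (gaussianPDFReal_pos _ _ _ (by positivity)).ne', log_exp, add_div,
    neg_div, mul_div_cancel_right₀ _ ht.ne']

end KilledGaussianTail

theorem tendsto_log_sSup_killedGaussianTail_div {σ β x₀ : ℝ} (hσ : 0 < σ) (hx₀ : x₀ ∈ Ioc 0 1)
    (hx₀β : x₀ ≤ β) (hmin : IsMinOn (tailRate β) (Ioc 0 1) x₀) :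
    Tendsto (fun t => log (sSup (killedGaussianTail σ β t '' Ioc 0 t)) / t) atTop
      (𝓝 (-tailRate β x₀)) := by
  obtain ⟨hx₀pos, hx₀le⟩ := hx₀
  refine tendsto_log_sSup_image_div (tendsto_log_exp_mul_gaussianPDFReal_div hσ hx₀pos hx₀β)
    ?_ ?_
  · filter_upwards [eventually_gt_atTop 0] with t ht
    refine ⟨mul_pos (exp_pos _) (gaussianPDFReal_pos _ _ _ (by positivity)), x₀ * t,
      ⟨by positivity, mul_le_of_le_one_left ht.le hx₀le⟩,
      exp_mul_gaussianPDFReal_le_killedGaussianTail hσ ht hx₀pos hx₀β⟩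
  · filter_upwards [eventually_gt_atTop 0] with t ht τ ⟨hτ, hτt⟩
    refine (killedGaussianTail_le hσ ht hτ).trans (exp_le_exp.2 (neg_le_neg ?_))
    rw [mul_comm]
    exact mul_le_mul_of_nonneg_left
      (isMinOn_iff.1 hmin _ ⟨div_pos hτ ht, (div_le_one ht).2 hτt⟩) ht.le

theorem lemma_sup_integral_asymptotics (σ α v φ : ℝ)
    (hσ : 0 < σ) (hα : α < 1)
    (hv : v = α * Real.sqrt (2 * σ ^ 2))
    (hφ₁ : 1 - Real.sqrt 2 ≤ α → φ = 2 * (Real.sqrt 2 - 1) * (1 - α))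
    (hφ₂ : α ≤ 1 - Real.sqrt 2 → φ = 1 + α ^ 2) :
    Tendsto (fun t : ℝ =>
      Real.log (sSup ((fun τ : ℝ =>
        Real.exp (-τ) *
          ∫ y in Set.Iic (v * t - Real.sqrt (2 * σ ^ 2) * (t - τ) - 1),
            (2 * Real.pi * σ ^ 2 * τ) ^ (-(1 : ℝ) / 2) *
              Real.exp (-y ^ 2 / (2 * σ ^ 2 * τ))) '' Set.Ioc 0 t)) / t)
      atTop (nhds (-φ)) := by
  have hG : ∀ t, ∀ τ ∈ Ioc 0 t, exp (-τ) * ∫ y in Iic (v * t - √(2 * σ ^ 2) * (t - τ) - 1),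
      (2 * π * σ ^ 2 * τ) ^ (-(1 : ℝ) / 2) * exp (-y ^ 2 / (2 * σ ^ 2 * τ))
        = killedGaussianTail σ (1 - α) t τ := by
    intro t τ ⟨hτ, _⟩
    rw [killedGaussianTail, gaussianReal_zero_toNNReal_real (by positivity),
      show v * t - √(2 * σ ^ 2) * (t - τ) - 1 = √(2 * σ ^ 2) * (τ - (1 - α) * t) - 1 by
        rw [hv]; ring]
    simp only [mul_assoc]
  simp only [image_congr (hG _)]
  have hsqrt2 : 1 ≤ √2 := one_le_sqrt.2 one_le_two
  rcases le_total α (1 - √2) with hαle | hαge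
  · rw [hφ₂ hαle, show 1 + α ^ 2 = tailRate (1 - α) 1 by rw [tailRate_one (by linarith)]; ring]
    exact tendsto_log_sSup_killedGaussianTail_div hσ ⟨one_pos, le_rfl⟩
      (by linarith) (isMinOn_tailRate_one (by linarith))
  · have hβ : 0 < 1 - α := by linarith
    rw [hφ₁ hαge, ← tailRate_div_sqrt_two hβ]
    exact tendsto_log_sSup_killedGaussianTail_div hσ
      ⟨by positivity, (div_le_one (by positivity)).2 (by linarith)⟩
      (div_le_self hβ.le hsqrt2)
      ((isMinOn_tailRate_div_sqrt_two hβ).on_subset Ioc_subset_Ioi_self)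
end

section
/- Fix α < 1 and define f : (0, 1] → ℝ by f(s) = s + ((α − (1 − s))·√2)²/(2s) when α ≤ 1 − s, and f(s) = s otherwise. Then inf_{s ∈ (0,1]} f(s) = 2(√2 − 1)(1 − α) if α ∈ [1 − √2, 1), and inf_{s ∈ (0,1]} f(s) = 1 + α² if α ≤ 1 − √2. -/
theorem first_branching_time_optimization (α : ℝ) (hα : α < 1) (f : ℝ → ℝ)
    (hf : ∀ s : ℝ, f s =
      if α ≤ 1 - s then s + ((α - (1 - s)) * Real.sqrt 2) ^ 2 / (2 * s)
      else s) :
    (1 - Real.sqrt 2 ≤ α →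
      sInf (f '' Set.Ioc 0 1) = 2 * (Real.sqrt 2 - 1) * (1 - α)) ∧
    (α ≤ 1 - Real.sqrt 2 →
      sInf (f '' Set.Ioc 0 1) = 1 + α ^ 2) := by
  have h2 : Real.sqrt 2 ^ 2 = 2 := Real.sq_sqrt (by norm_num)
  have h2pos : (0:ℝ) < Real.sqrt 2 := Real.sqrt_pos.mpr (by norm_num)
  have h2lt : Real.sqrt 2 < 3/2 := by nlinarith
  have h2gt : 1 < Real.sqrt 2 := by nlinarith
  set c := 1 - α with hc
  have hcpos : 0 < c := by linarith
  have key : ∀ s : ℝ, 0 < s →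
      ((α - (1 - s)) * Real.sqrt 2) ^ 2 / (2 * s) = (s - c)^2 / s := by
    intro s hs
    rw [mul_pow, h2]
    field_simp
    ring
  constructor
  · intro h
    have hcle : c ≤ Real.sqrt 2 := by linarith
    apply IsLeast.csInf_eq
    constructor
    · refine ⟨c / Real.sqrt 2, ⟨by positivity, ?_⟩, ?_⟩
      · rw [div_le_one h2pos]; exact hcle
      · have hs0pos : (0:ℝ) < c / Real.sqrt 2 := by positivity
        have hs0 : c / Real.sqrt 2 ≤ c := by
          rw [div_le_iff₀ h2pos]; nlinarith
        rw [hf, if_pos (by linarith), key _ hs0pos]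
        field_simp
        ring_nf
        linear_combination (-1) * h2
    · rintro x ⟨s, ⟨hs0, hs1⟩, rfl⟩
      rw [hf]
      by_cases hcase : α ≤ 1 - s
      · rw [if_pos hcase, key _ hs0, add_div' _ _ _ hs0.ne', le_div_iff₀ hs0]
        nlinarith [sq_nonneg (Real.sqrt 2 * s - c)]
      · rw [if_neg hcase]
        push_neg at hcase
        nlinarith
  · intro h
    have hcge : Real.sqrt 2 ≤ c := by linarith
    have hc2 : 2 ≤ c^2 := by nlinarith
    apply IsLeast.csInf_eq
    constructor
    · refine ⟨1, ⟨by norm_num, le_refl 1⟩, ?_⟩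
      rw [hf, if_pos (by nlinarith), key _ one_pos]
      field_simp
      ring_nf
      rw [hc]; ring
    · rintro x ⟨s, ⟨hs0, hs1⟩, rfl⟩
      have hcase : α ≤ 1 - s := by nlinarith
      rw [hf, if_pos hcase, key _ hs0, add_div' _ _ _ hs0.ne', le_div_iff₀ hs0]
      nlinarith [sq_nonneg (1 - s), mul_nonneg (sub_nonneg.mpr hs1) (by nlinarith : (0:ℝ) ≤ c^2 - 2*s)]
end

section
/- Fix σ > 0 and v < √(2σ²). For t > 0 and τ ∈ (0, t], let H(t, τ) = ∫_{-∞}^{v t − √(2σ²)(t−τ) + √t} (2πσ²τ)^{-1/2} e^{−τ − y²/(2σ²τ)} dy. Then limsup over t → ∞ of ln(sup_{τ ∈ (0,t]} H(t, τ))/t equals −φ(v/√(2σ²)), where φ(α) = 2(√2−1)(1−α) for α ≥ 1 − √2 and φ(α) = 1 + α² for α ≤ 1 − √2. -/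
/-!
The integrand is `exp (-τ)` times the `N(0, σ²τ)` density, and the upper limit of integration is
`-√(2σ²) (g t - τ)` with `g = 1 - α - 1 / (√(2σ²) √t) → 1 - α`. A Chernoff bound gives
`H(t, τ) ≤ exp (-τ - max 0 (g t - τ)² / τ) ≤ exp (-rate g * t)`, where by AM-GM
`rate a = min_{s ∈ (0, 1]} (s + max 0 (a - s)² / s)`, attained at `s = a / √2` for `a ≤ √2` and at
`s = 1` otherwise. Conversely, bounding the density from below on `[b - 1, b]` gives
`log H(t, s t) ≥ -(s + (g - s)² / s) t + o(t)` for the minimiser `s` of `rate (1 - α)`.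
Both exponents, divided by `t`, tend to `-rate (1 - α) = -φ(α)` since `rate` is continuous.
-/

open Real Filter MeasureTheory ProbabilityTheory Set Topology
open scoped NNReal

/-- `rate (1 - α)` is `φ(α)`. -/
noncomputable def rate (a : ℝ) : ℝ :=
  if a ≤ √2 then 2 * (√2 - 1) * a else 1 + (a - 1) ^ 2

lemma continuous_rate : Continuous rate := by
  refine Continuous.if_le (by fun_prop) (by fun_prop) continuous_id continuous_const ?_
  rintro a rfl
  nlinarith [sq_sqrt (show (0 : ℝ) ≤ 2 by norm_num)]

lemma rate_mul_le {a t τ : ℝ} (ha : 0 ≤ a) (hτ : τ ∈ Ioc 0 t) :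
    rate a * t ≤ τ + max 0 (a * t - τ) ^ 2 / τ := by
  obtain ⟨hτ, hτt⟩ := hτ
  have h2 : √2 ^ 2 = 2 := sq_sqrt (by norm_num)
  have h1 : 1 < √2 := by nlinarith [sqrt_nonneg 2]
  unfold rate
  split_ifs with ha2
  · rcases le_total (a * t - τ) 0 with h | h
    · have hcoef : 2 * (√2 - 1) ≤ 1 := by nlinarith
      rw [max_eq_left h, zero_pow two_ne_zero, zero_div, add_zero]
      nlinarith [mul_le_mul_of_nonneg_right hcoef (mul_nonneg ha (hτ.le.trans hτt))]
    · rw [max_eq_right h, ← sub_nonneg]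
      have : τ + (a * t - τ) ^ 2 / τ - 2 * (√2 - 1) * a * t = (a * t - √2 * τ) ^ 2 / τ := by
        field_simp
        linear_combination (-τ ^ 2) * h2
      rw [this]
      positivity
  · have hat : τ ≤ a * t := by nlinarith
    rw [max_eq_right (by linarith), ← sub_nonneg]
    have : τ + (a * t - τ) ^ 2 / τ - (1 + (a - 1) ^ 2) * t =
        (t - τ) * (a ^ 2 * t - 2 * τ) / τ := by
      field_simp
      ring
    rw [this]
    have ha2' : 2 ≤ a ^ 2 := by nlinarith
    have : 2 * τ ≤ a ^ 2 * t := by nlinarith [mul_le_mul_of_nonneg_right ha2' (hτ.le.trans hτt)]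
    apply div_nonneg _ hτ.le
    nlinarith

lemma exists_rate_eq {a : ℝ} (ha : 0 < a) :
    ∃ s ∈ Ioc (0 : ℝ) 1, rate a = s + (a - s) ^ 2 / s := by
  have h2 : √2 ^ 2 = 2 := sq_sqrt (by norm_num)
  have h1 : 1 < √2 := by nlinarith [sqrt_nonneg 2]
  unfold rate
  split_ifs with ha2
  · refine ⟨a / √2, ⟨by positivity, (div_le_one (by positivity)).2 (by linarith)⟩, ?_⟩
    field_simp
    linear_combination h2
  · exact ⟨1, ⟨one_pos, le_rfl⟩, by ring⟩

lemma integral_Iic_gaussianPDFReal_le {v : ℝ≥0} (hv : v ≠ 0) (b : ℝ) :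
    ∫ x in Iic b, gaussianPDFReal 0 v x ≤ exp (-max 0 (-b) ^ 2 / (2 * v)) := by
  have hprob : ∫ x in Iic b, gaussianPDFReal 0 v x = (gaussianReal 0 v).real (Iic b) := by
    rw [measureReal_def, gaussianReal_apply_eq_integral 0 hv, ENNReal.toReal_ofReal
      (setIntegral_nonneg measurableSet_Iic fun x _ ↦ gaussianPDFReal_nonneg 0 v x)]
  rw [hprob]
  rcases le_total b 0 with hb | hb
  · have hv' : (0 : ℝ) < v := by positivity
    -- Chernoff bound at the optimal parameter `b / v`
    calc _ ≤ exp (-(b / v) * b) * mgf id (gaussianReal 0 v) (b / v) :=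
          measure_le_le_exp_mul_mgf b (div_nonpos_of_nonpos_of_nonneg hb v.2)
            (integrable_exp_mul_gaussianReal _)
      _ = _ := by
          rw [mgf_id_gaussianReal, ← exp_add, max_eq_right (by linarith)]
          congr 1
          field_simp
          ring
  · rw [max_eq_left (by linarith)]
    simp [measureReal_le_one]

lemma gaussianPDFReal_le_integral_Iic (v : ℝ≥0) (b : ℝ) :
    gaussianPDFReal 0 v (|b| + 1) ≤ ∫ x in Iic b, gaussianPDFReal 0 v x := by
  have hmono : ∀ x ∈ Icc (b - 1) b, gaussianPDFReal 0 v (|b| + 1) ≤ gaussianPDFReal 0 v x := by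
    intro x hx
    have : x ^ 2 ≤ (|b| + 1) ^ 2 :=
      sq_le_sq' (by linarith [neg_abs_le b, hx.1]) (by linarith [le_abs_self b, hx.2])
    simp only [gaussianPDFReal, sub_zero]
    gcongr
  calc gaussianPDFReal 0 v (|b| + 1) = ∫ _ in Icc (b - 1) b, gaussianPDFReal 0 v (|b| + 1) := by
        simp
    _ ≤ ∫ x in Icc (b - 1) b, gaussianPDFReal 0 v x :=
        setIntegral_mono_on (integrableOn_const (by simp))
          (integrable_gaussianPDFReal 0 v).integrableOn measurableSet_Icc hmono
    _ ≤ _ := setIntegral_mono_set (integrable_gaussianPDFReal 0 v).integrableOn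
        (ae_of_all _ (gaussianPDFReal_nonneg 0 v)) Icc_subset_Iic_self.eventuallyLE

lemma tendsto_log_mul_div_atTop {K : ℝ} (hK : 0 < K) :
    Tendsto (fun t ↦ log (K * t) / t) atTop (𝓝 0) := by
  have h := (isLittleO_log_id_atTop.comp_tendsto
    (tendsto_id.const_mul_atTop hK)).tendsto_div_nhds_zero.const_mul K
  rw [mul_zero] at h
  refine h.congr' ?_
  filter_upwards [eventually_gt_atTop 0] with t ht
  simp only [Function.comp_apply, id]
  field_simp

/-- `H(t, τ)`. -/
noncomputable def killedGaussianIntegral (σ v t τ : ℝ) : ℝ :=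
  ∫ y in Iic (v * t - √(2 * σ ^ 2) * (t - τ) + √t),
    (2 * π * σ ^ 2 * τ) ^ (-(1 : ℝ) / 2) * exp (-τ - y ^ 2 / (2 * σ ^ 2 * τ))

/-- The `√t` shift of the integration limit is absorbed into `gap`, which tends to `1 - α`. -/
noncomputable def gap (σ v t : ℝ) : ℝ := 1 - v / √(2 * σ ^ 2) - (√(2 * σ ^ 2) * √t)⁻¹

section

variable {σ v t τ : ℝ}

lemma sqrt_two_mul_sq_pos (hσ : σ ≠ 0) : 0 < √(2 * σ ^ 2) := by positivity

lemma upperLimit_eq_neg_mul_gap (hσ : σ ≠ 0) (ht : 0 < t) :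
    v * t - √(2 * σ ^ 2) * (t - τ) + √t = -(√(2 * σ ^ 2) * (gap σ v t * t - τ)) := by
  have hc := sqrt_two_mul_sq_pos hσ
  have hst : √t ^ 2 = t := sq_sqrt ht.le
  have : 0 < √t := sqrt_pos.2 ht
  unfold gap
  field_simp
  linear_combination hst

lemma rpow_mul_exp_eq_exp_mul_gaussianPDFReal (hσ : σ ≠ 0) (hτ : 0 < τ) (y : ℝ) :
    (2 * π * σ ^ 2 * τ) ^ (-(1 : ℝ) / 2) * exp (-τ - y ^ 2 / (2 * σ ^ 2 * τ)) =
      exp (-τ) * gaussianPDFReal 0 (σ ^ 2 * τ).toNNReal y := by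
  rw [gaussianPDFReal, Real.coe_toNNReal _ (by positivity), sqrt_eq_rpow,
    ← rpow_neg (by positivity), sub_eq_add_neg, exp_add]
  ring_nf

lemma killedGaussianIntegral_eq (hσ : σ ≠ 0) (ht : 0 < t) (hτ : 0 < τ) :
    killedGaussianIntegral σ v t τ = exp (-τ) * ∫ y in Iic (-(√(2 * σ ^ 2) * (gap σ v t * t - τ))),
      gaussianPDFReal 0 (σ ^ 2 * τ).toNNReal y := by
  simp_rw [killedGaussianIntegral, upperLimit_eq_neg_mul_gap hσ ht,
    rpow_mul_exp_eq_exp_mul_gaussianPDFReal hσ hτ, integral_const_mul]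

lemma killedGaussianIntegral_le (hσ : σ ≠ 0) (hτ : τ ∈ Ioc 0 t) (hgap : 0 ≤ gap σ v t) :
    killedGaussianIntegral σ v t τ ≤ exp (-(rate (gap σ v t) * t)) := by
  have hc := sqrt_two_mul_sq_pos hσ
  have hτ0 := hτ.1
  rw [killedGaussianIntegral_eq hσ (hτ0.trans_le hτ.2) hτ0]
  calc _ ≤ exp (-τ) * exp (-max 0 (-(-(√(2 * σ ^ 2) * (gap σ v t * t - τ)))) ^ 2 /
          (2 * (σ ^ 2 * τ).toNNReal)) := by
        gcongr
        exact integral_Iic_gaussianPDFReal_le (Real.toNNReal_pos.2 (by positivity)).ne' _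
    _ = exp (-(τ + max 0 (gap σ v t * t - τ) ^ 2 / τ)) := by
        have hmax : max 0 (√(2 * σ ^ 2) * (gap σ v t * t - τ)) =
            √(2 * σ ^ 2) * max 0 (gap σ v t * t - τ) := by
          rw [mul_max_of_nonneg _ _ hc.le, mul_zero]
        rw [← exp_add, neg_neg, hmax, mul_pow, sq_sqrt (by positivity),
          Real.coe_toNNReal _ (by positivity)]
        congr 1
        field_simp
        ring
    _ ≤ _ := exp_le_exp.2 (neg_le_neg (rate_mul_le hgap hτ))

lemma exp_le_killedGaussianIntegral (hσ : σ ≠ 0) (ht : 0 < t) (hτ : 0 < τ) :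
    exp (-τ - log (2 * π * σ ^ 2 * τ) / 2 - (|gap σ v t * t - τ| + (√(2 * σ ^ 2))⁻¹) ^ 2 / τ) ≤
      killedGaussianIntegral σ v t τ := by
  have hc := sqrt_two_mul_sq_pos hσ
  rw [killedGaussianIntegral_eq hσ ht hτ]
  calc _ = exp (-τ) * gaussianPDFReal 0 (σ ^ 2 * τ).toNNReal
        (|-(√(2 * σ ^ 2) * (gap σ v t * t - τ))| + 1) := by
        rw [gaussianPDFReal, Real.coe_toNNReal _ (by positivity), abs_neg, abs_mul, abs_of_pos hc,
          ← exp_log (sqrt_pos.2 (by positivity : 0 < 2 * π * (σ ^ 2 * τ))), ← exp_neg, ← exp_add,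
          ← exp_add, log_sqrt (by positivity)]
        congr 1
        field_simp
        rw [sq_sqrt (by positivity)]
        ring
    _ ≤ _ := by
        gcongr
        exact gaussianPDFReal_le_integral_Iic _ _

lemma tendsto_gap (hσ : σ ≠ 0) : Tendsto (gap σ v) atTop (𝓝 (1 - v / √(2 * σ ^ 2))) := by
  have h := (tendsto_const_nhds (x := 1 - v / √(2 * σ ^ 2))).sub
    (tendsto_sqrt_atTop.const_mul_atTop (sqrt_two_mul_sq_pos hσ)).inv_tendsto_atTop
  rw [sub_zero] at h
  exact h

lemma bddAbove_killedGaussianIntegral_image (hσ : σ ≠ 0) (hgap : 0 ≤ gap σ v t) :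
    BddAbove (killedGaussianIntegral σ v t '' Ioc 0 t) :=
  ⟨_, forall_mem_image.2 fun _ hτ ↦ killedGaussianIntegral_le hσ hτ hgap⟩

lemma le_log_sSup_div (hσ : σ ≠ 0) (hgap : 0 ≤ gap σ v t) (hτ : τ ∈ Ioc 0 t) :
    (-τ - log (2 * π * σ ^ 2 * τ) / 2 - (|gap σ v t * t - τ| + (√(2 * σ ^ 2))⁻¹) ^ 2 / τ) / t ≤
      log (sSup (killedGaussianIntegral σ v t '' Ioc 0 t)) / t := by
  have ht := hτ.1.trans_le hτ.2
  have hle := (exp_le_killedGaussianIntegral hσ ht hτ.1).trans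
    (le_csSup (bddAbove_killedGaussianIntegral_image hσ hgap) (mem_image_of_mem _ hτ))
  gcongr
  exact (le_log_iff_exp_le ((exp_pos _).trans_le hle)).2 hle

lemma log_sSup_div_le (hσ : σ ≠ 0) (ht : 0 < t) (hgap : 0 ≤ gap σ v t) :
    log (sSup (killedGaussianIntegral σ v t '' Ioc 0 t)) / t ≤ -rate (gap σ v t) := by
  have hmem : t ∈ Ioc 0 t := ⟨ht, le_rfl⟩
  have hpos := (exp_pos _).trans_le ((exp_le_killedGaussianIntegral hσ ht ht).trans
    (le_csSup (bddAbove_killedGaussianIntegral_image hσ hgap) (mem_image_of_mem _ hmem)))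
  rw [div_le_iff₀ ht, neg_mul, log_le_iff_le_exp hpos]
  exact csSup_le ⟨_, mem_image_of_mem _ hmem⟩
    (forall_mem_image.2 fun _ hτ ↦ killedGaussianIntegral_le hσ hτ hgap)

lemma tendsto_lower_exponent (hσ : σ ≠ 0) {s : ℝ} (hs : 0 < s) :
    Tendsto (fun t ↦ (-(s * t) - log (2 * π * σ ^ 2 * (s * t)) / 2 -
        (|gap σ v t * t - s * t| + (√(2 * σ ^ 2))⁻¹) ^ 2 / (s * t)) / t) atTop
      (𝓝 (-(s + (1 - v / √(2 * σ ^ 2) - s) ^ 2 / s))) := by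
  have hlim : Tendsto (fun t ↦ -s - log (2 * π * σ ^ 2 * s * t) / t / 2 -
      (|gap σ v t - s| + (√(2 * σ ^ 2))⁻¹ * t⁻¹) ^ 2 / s) atTop
      (𝓝 (-s - 0 / 2 - (|1 - v / √(2 * σ ^ 2) - s| + (√(2 * σ ^ 2))⁻¹ * 0) ^ 2 / s)) :=
    (tendsto_const_nhds.sub ((tendsto_log_mul_div_atTop (by positivity)).div_const 2)).sub
      (((((tendsto_gap hσ).sub_const s).abs.add
        (tendsto_inv_atTop_zero.const_mul _)).pow 2).div_const s)
  rw [zero_div, mul_zero, add_zero, sq_abs, sub_zero, ← neg_add'] at hlim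
  refine hlim.congr' ?_
  filter_upwards [eventually_gt_atTop 0] with t ht
  rw [← sub_mul, abs_mul, abs_of_pos ht]
  field_simp

end

theorem sup_integral_limsup_asymptotics (σ v α φ : ℝ)
    (hσ : 0 < σ) (hv : v < Real.sqrt (2 * σ ^ 2))
    (hα : α = v / Real.sqrt (2 * σ ^ 2))
    (hφ₁ : 1 - Real.sqrt 2 ≤ α → φ = 2 * (Real.sqrt 2 - 1) * (1 - α))
    (hφ₂ : α ≤ 1 - Real.sqrt 2 → φ = 1 + α ^ 2) :
    Filter.limsup (fun t : ℝ =>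
      Real.log (sSup ((fun τ : ℝ =>
        ∫ y in Set.Iic (v * t - Real.sqrt (2 * σ ^ 2) * (t - τ) + Real.sqrt t),
          (2 * Real.pi * σ ^ 2 * τ) ^ (-(1 : ℝ) / 2) *
            Real.exp (-τ - y ^ 2 / (2 * σ ^ 2 * τ))) '' Set.Ioc 0 t)) / t)
      atTop = -φ := by
  subst hα
  have hσ0 : σ ≠ 0 := hσ.ne'
  have hp : 0 < 1 - v / √(2 * σ ^ 2) := by
    rwa [sub_pos, div_lt_one (sqrt_two_mul_sq_pos hσ0)]
  have hrate : rate (1 - v / √(2 * σ ^ 2)) = φ := by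
    unfold rate
    split_ifs with h
    · exact (hφ₁ (by linarith)).symm
    · rw [hφ₂ (by linarith)]
      ring
  obtain ⟨s, hs, hs_eq⟩ := exists_rate_eq hp
  have hgap_nonneg : ∀ᶠ t in atTop, 0 ≤ gap σ v t :=
    (tendsto_gap hσ0).eventually (eventually_ge_nhds hp)
  have hlower := tendsto_lower_exponent (v := v) hσ0 hs.1
  rw [← hs_eq, hrate] at hlower
  have hupper := ((continuous_rate.tendsto _).comp (tendsto_gap (v := v) hσ0)).neg
  rw [hrate] at hupper
  refine (tendsto_of_tendsto_of_tendsto_of_le_of_le' hlower hupper ?_ ?_).limsup_eq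
  · filter_upwards [eventually_gt_atTop 0, hgap_nonneg] with t ht hgap
    exact le_log_sSup_div hσ0 hgap ⟨mul_pos hs.1 ht, mul_le_of_le_one_left ht.le hs.2⟩
  · filter_upwards [eventually_gt_atTop 0, hgap_nonneg] with t ht hgap
    exact log_sSup_div_le hσ0 ht hgap
end
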